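/- arXiv:2602.12760 — 8 statements merged into one kernel-verified Lean document; each statement's English description precedes it below -/
import Mathlib

section
/- Let H be a complex Hilbert space, let F be a bounded linear operator on H, and let r ∈ ℝ be such that Re ⟪φ, F φ⟫ ≥ r ‖φ‖² for every φ ∈ H. Then for every t ≥ 0 one has ‖exp(−t·F)‖ ≤ e^{−t r}. -/
/-! If `Re ⟪x, A x⟫ ≤ 0` for all `x`, then `d/ds ‖exp (s A) x‖² = 2 Re ⟪y, A y⟫ ≤ 0` along
`y = exp (s A) x`, so `exp (t A)` is a contraction for `t ≥ 0`. The theorem follows by applying this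
to the dissipative operator `r - F`, since `exp (-t F) = e^{-t r} exp (t (r - F))`. -/

open NormedSpace

section

variable {𝕜 E : Type*} [RCLike 𝕜] [NormedAddCommGroup E] [NormedSpace 𝕜 E] [NormedSpace ℝ E]
  [IsScalarTower ℝ 𝕜 E] [CompleteSpace E]

theorem hasDerivAt_exp_ofReal_smul_apply (A : E →L[𝕜] E) (x : E) (s : ℝ) :
    HasDerivAt (fun s : ℝ => exp ((s : 𝕜) • A) x) (A (exp ((s : 𝕜) • A) x)) s := by
  have h : HasDerivAt (fun u : 𝕜 => exp (u • A) x) (A (exp ((s : 𝕜) • A) x)) s :=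
    (ContinuousLinearMap.apply 𝕜 E x).hasFDerivAt.comp_hasDerivAt _
      (hasDerivAt_exp_smul_const' A (s : 𝕜))
  simpa [Function.comp_def] using
    (h.hasFDerivAt.restrictScalars ℝ).comp_hasDerivAt s (RCLike.ofRealCLM (K := 𝕜)).hasDerivAt

end

section

variable {𝕜 E : Type*} [RCLike 𝕜] [NormedAddCommGroup E] [InnerProductSpace 𝕜 E] [CompleteSpace E]

theorem hasDerivAt_norm_sq_exp_ofReal_smul_apply (A : E →L[𝕜] E) (x : E) (s : ℝ) :
    HasDerivAt (fun s : ℝ => ‖exp ((s : 𝕜) • A) x‖ ^ 2)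
      (2 * RCLike.re (inner 𝕜 (exp ((s : 𝕜) • A) x) (A (exp ((s : 𝕜) • A) x)))) s := by
  let _ := InnerProductSpace.rclikeToReal 𝕜 E
  rw [← real_inner_eq_re_inner]
  exact (hasDerivAt_exp_ofReal_smul_apply A x s).norm_sq

theorem antitone_norm_exp_ofReal_smul_apply {A : E →L[𝕜] E}
    (hA : ∀ x, RCLike.re (inner 𝕜 x (A x)) ≤ 0) (x : E) :
    Antitone fun s : ℝ => ‖exp ((s : 𝕜) • A) x‖ := by
  have hsq : Antitone fun s : ℝ => ‖exp ((s : 𝕜) • A) x‖ ^ 2 :=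
    antitone_of_hasDerivAt_nonpos (hasDerivAt_norm_sq_exp_ofReal_smul_apply A x)
      fun s => mul_nonpos_of_nonneg_of_nonpos zero_le_two (hA _)
  exact fun s t hst =>
    (pow_le_pow_iff_left₀ (norm_nonneg _) (norm_nonneg _) two_ne_zero).1 (hsq hst)

theorem norm_exp_ofReal_smul_le_one {A : E →L[𝕜] E}
    (hA : ∀ x, RCLike.re (inner 𝕜 x (A x)) ≤ 0) {t : ℝ} (ht : 0 ≤ t) :
    ‖exp ((t : 𝕜) • A)‖ ≤ 1 :=
  ContinuousLinearMap.opNorm_le_bound _ zero_le_one fun x => by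
    simpa using antitone_norm_exp_ofReal_smul_apply hA x ht

end

theorem exp_add_algebraMap {𝕂 𝔸 : Type*} [RCLike 𝕂] [NormedRing 𝔸] [NormedAlgebra 𝕂 𝔸]
    [CompleteSpace 𝔸] (x : 𝔸) (c : 𝕂) :
    exp (x + algebraMap 𝕂 𝔸 c) = exp c • exp x := by
  let _ : NormedAlgebra ℚ 𝔸 := NormedAlgebra.restrictScalars ℚ 𝕂 𝔸
  rw [exp_add_of_commute (Algebra.commute_algebraMap_right c x), ← algebraMap_exp_comm,
    ← Algebra.commutes, Algebra.smul_def]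

/-- Gronwall-type bound: if `Re ⟪φ, Fφ⟫ ≥ r‖φ‖²` for all `φ`, then
`‖exp(−tF)‖ ≤ e^{−tr}` for all `t ≥ 0`. -/
theorem stmt_4 {H : Type*} [NormedAddCommGroup H] [InnerProductSpace ℂ H] [CompleteSpace H]
    (F : H →L[ℂ] H) (r : ℝ)
    (hF : ∀ φ : H, r * ‖φ‖ ^ 2 ≤ ((inner ℂ φ (F φ) : ℂ)).re)
    (t : ℝ) (ht : 0 ≤ t) :
    ‖NormedSpace.exp ((-(t : ℂ)) • F)‖ ≤ Real.exp (-(t * r)) := by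
  set B : H →L[ℂ] H := algebraMap ℂ _ r - F
  have hB : ∀ φ, RCLike.re (inner ℂ φ (B φ)) ≤ 0 := fun φ => by
    simpa [B, ← Complex.ofReal_pow] using hF φ
  have hsplit : -(t : ℂ) • F = (t : ℂ) • B + algebraMap ℂ _ ((-(t * r) : ℝ) : ℂ) := by
    rw [smul_sub, Algebra.algebraMap_eq_smul_one, Algebra.algebraMap_eq_smul_one, smul_smul,
      Complex.ofReal_neg, Complex.ofReal_mul, neg_smul, neg_smul]
    abel
  rw [hsplit, exp_add_algebraMap, norm_smul, ← Complex.exp_eq_exp_ℂ, Complex.norm_exp_ofReal]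
  exact mul_le_of_le_one_right (Real.exp_nonneg _) (norm_exp_ofReal_smul_le_one hB ht)
end

section
/- Let V be a finite-dimensional complex inner product space, let F be a linear operator on V, and let r > 0 be such that Re ⟪φ, F φ⟫ ≥ r ‖φ‖² for every φ ∈ V. Then F is invertible, the Bochner integral ∫₀^∞ exp(−t·F) dt converges, and ∫₀^∞ exp(−t·F) dt = F^{-1}. -/
/-!
For `r > 0` the map `t ↦ exp (-t a)` is the semigroup generated by `-a`, and the FTC applied to
`d/dt exp (-t a) = -a exp (-t a)` shows that its integral over `(0, ∞)` is a two-sided inverse of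
`a` as soon as `‖exp (-t a)‖ ≤ e^{-rt}`. For a strictly accretive operator `F` this decay comes from
Grönwall's inequality: `d/dt ‖exp (-t F) φ‖² = -2 Re ⟪ψ, F ψ⟫ ≤ -2r ‖ψ‖²` with `ψ = exp (-t F) φ`.
-/

open MeasureTheory Filter Topology NormedSpace Set

section Semigroup

variable {A : Type*} [NormedRing A] [NormedAlgebra ℂ A] {a : A} {r : ℝ}

theorem tendsto_exp_neg_smul_atTop (hr : 0 < r)
    (hdecay : ∀ t : ℝ, 0 ≤ t → ‖exp ((-(t : ℂ)) • a)‖ ≤ Real.exp (-(r * t))) :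
    Tendsto (fun t : ℝ => exp ((-(t : ℂ)) • a)) atTop (𝓝 0) := by
  refine squeeze_zero_norm' ?_
    (Real.tendsto_exp_neg_atTop_nhds_zero.comp (tendsto_id.const_mul_atTop hr))
  filter_upwards [eventually_ge_atTop 0] with t ht using hdecay t ht

variable [CompleteSpace A]

theorem hasDerivAt_exp_neg_smul (a : A) (t : ℝ) :
    HasDerivAt (fun s : ℝ => exp ((-(s : ℂ)) • a)) (-(a * exp ((-(t : ℂ)) • a))) t := by
  simpa only [Function.comp_def, Complex.ofRealCLM_apply, Complex.ofReal_one, one_smul, neg_smul,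
    smul_neg, neg_mul] using
    (hasDerivAt_exp_smul_const' (𝕂 := ℂ) (-a) (t : ℂ)).scomp t Complex.ofRealCLM.hasDerivAt

theorem continuous_exp_neg_smul (a : A) : Continuous fun s : ℝ => exp ((-(s : ℂ)) • a) :=
  continuous_iff_continuousAt.2 fun t => (hasDerivAt_exp_neg_smul a t).continuousAt

theorem integrableOn_exp_neg_smul_Ioi (hr : 0 < r)
    (hdecay : ∀ t : ℝ, 0 ≤ t → ‖exp ((-(t : ℂ)) • a)‖ ≤ Real.exp (-(r * t))) :
    IntegrableOn (fun t : ℝ => exp ((-(t : ℂ)) • a)) (Ioi 0) := by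
  refine Integrable.mono' (exp_neg_integrableOn_Ioi 0 hr)
    (continuous_exp_neg_smul a).aestronglyMeasurable ?_
  filter_upwards [ae_restrict_mem measurableSet_Ioi] with t ht
  simpa only [neg_mul] using hdecay t ht.le

theorem mul_integral_exp_neg_smul (hr : 0 < r)
    (hdecay : ∀ t : ℝ, 0 ≤ t → ‖exp ((-(t : ℂ)) • a)‖ ≤ Real.exp (-(r * t))) :
    a * ∫ t in Ioi (0 : ℝ), exp ((-(t : ℂ)) • a) = 1 := by
  have hint := integrableOn_exp_neg_smul_Ioi hr hdecay
  have hFTC := integral_Ioi_of_hasDerivAt_of_tendsto'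
    (f := fun s : ℝ => -exp ((-(s : ℂ)) • a))
    (fun t _ => by simpa only [neg_neg] using (hasDerivAt_exp_neg_smul a t).fun_neg)
    (hint.const_mul a) (tendsto_exp_neg_smul_atTop hr hdecay).neg
  rw [← integral_const_mul_of_integrable hint, hFTC]
  simp

theorem integral_exp_neg_smul_mul (hr : 0 < r)
    (hdecay : ∀ t : ℝ, 0 ≤ t → ‖exp ((-(t : ℂ)) • a)‖ ≤ Real.exp (-(r * t))) :
    (∫ t in Ioi (0 : ℝ), exp ((-(t : ℂ)) • a)) * a = 1 := by
  have hcomm (t : ℝ) : exp ((-(t : ℂ)) • a) * a = a * exp ((-(t : ℂ)) • a) :=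
    ((Commute.refl a).smul_right _).exp_right.eq.symm
  rw [← integral_mul_const_of_integrable (integrableOn_exp_neg_smul_Ioi hr hdecay)]
  simp_rw [hcomm]
  rw [integral_const_mul_of_integrable (integrableOn_exp_neg_smul_Ioi hr hdecay)]
  exact mul_integral_exp_neg_smul hr hdecay

theorem isUnit_of_norm_exp_neg_smul_le (hr : 0 < r)
    (hdecay : ∀ t : ℝ, 0 ≤ t → ‖exp ((-(t : ℂ)) • a)‖ ≤ Real.exp (-(r * t))) :
    IsUnit a :=
  isUnit_iff_exists.2 ⟨_, mul_integral_exp_neg_smul hr hdecay, integral_exp_neg_smul_mul hr hdecay⟩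

theorem inverse_eq_integral_exp_neg_smul (hr : 0 < r)
    (hdecay : ∀ t : ℝ, 0 ≤ t → ‖exp ((-(t : ℂ)) • a)‖ ≤ Real.exp (-(r * t))) :
    Ring.inverse a = ∫ t in Ioi (0 : ℝ), exp ((-(t : ℂ)) • a) :=
  Ring.inverse_unit ⟨a, _, mul_integral_exp_neg_smul hr hdecay, integral_exp_neg_smul_mul hr hdecay⟩

end Semigroup

section Accretive

variable {V : Type*} [NormedAddCommGroup V] [InnerProductSpace ℂ V] [CompleteSpace V]

theorem hasDerivAt_norm_sq_exp_neg_smul_apply (F : V →L[ℂ] V) (φ : V) (t : ℝ) :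
    HasDerivAt (fun s : ℝ => ‖exp ((-(s : ℂ)) • F) φ‖ ^ 2)
      (-(2 * (inner ℂ (exp ((-(t : ℂ)) • F) φ) (F (exp ((-(t : ℂ)) • F) φ))).re)) t := by
  let _ := InnerProductSpace.rclikeToReal ℂ V
  simpa [real_inner_eq_re_inner] using
    (((ContinuousLinearMap.apply ℂ V φ).restrictScalars ℝ).hasFDerivAt.comp_hasDerivAt t
      (hasDerivAt_exp_neg_smul F t)).norm_sq

variable {F : V →L[ℂ] V} {r : ℝ}

theorem norm_exp_neg_smul_apply_sq_le
    (hF : ∀ φ : V, r * ‖φ‖ ^ 2 ≤ (inner ℂ φ (F φ)).re) (φ : V) {t : ℝ} (ht : 0 ≤ t) :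
    ‖exp ((-(t : ℂ)) • F) φ‖ ^ 2 ≤ ‖φ‖ ^ 2 * Real.exp (-(2 * r) * t) := by
  have hderiv := hasDerivAt_norm_sq_exp_neg_smul_apply F φ
  have h := le_gronwallBound_of_liminf_deriv_right_le (δ := ‖φ‖ ^ 2) (K := -(2 * r)) (ε := 0)
    (fun s _ => (hderiv s).continuousAt.continuousWithinAt)
    (fun s _ _ hlt => (hderiv s).hasDerivWithinAt.liminf_right_slope_le hlt)
    (by simp) (fun s _ => by linarith [hF (exp ((-(s : ℂ)) • F) φ)]) t ⟨ht, le_rfl⟩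
  simpa [gronwallBound_ε0] using h

theorem norm_exp_neg_smul_le_of_accretive
    (hF : ∀ φ : V, r * ‖φ‖ ^ 2 ≤ (inner ℂ φ (F φ)).re) {t : ℝ} (ht : 0 ≤ t) :
    ‖exp ((-(t : ℂ)) • F)‖ ≤ Real.exp (-(r * t)) := by
  refine ContinuousLinearMap.opNorm_le_bound _ (Real.exp_nonneg _) fun φ => ?_
  refine le_of_pow_le_pow_left₀ two_ne_zero (by positivity) ?_
  calc ‖exp ((-(t : ℂ)) • F) φ‖ ^ 2 ≤ ‖φ‖ ^ 2 * Real.exp (-(2 * r) * t) :=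
        norm_exp_neg_smul_apply_sq_le hF φ ht
    _ = (Real.exp (-(r * t)) * ‖φ‖) ^ 2 := by
        rw [mul_pow, sq (Real.exp _), ← Real.exp_add]
        ring_nf

end Accretive

/-- For a strictly accretive operator `F` on a finite-dimensional complex inner
product space, `F` is invertible, `∫₀^∞ exp(−tF) dt` converges, and it equals `F⁻¹`. -/
theorem stmt_5 {V : Type*} [NormedAddCommGroup V] [InnerProductSpace ℂ V]
    [FiniteDimensional ℂ V]
    (F : V →L[ℂ] V) (r : ℝ) (hr : 0 < r)
    (hF : ∀ φ : V, r * ‖φ‖ ^ 2 ≤ ((inner ℂ φ (F φ) : ℂ)).re) :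
    IsUnit F ∧
    IntegrableOn (fun t : ℝ => NormedSpace.exp ((-(t : ℂ)) • F)) (Set.Ioi 0) ∧
    ∫ t in Set.Ioi (0 : ℝ), NormedSpace.exp ((-(t : ℂ)) • F) = Ring.inverse F := by
  have : CompleteSpace V := FiniteDimensional.complete ℂ V
  have hdecay (t : ℝ) (ht : 0 ≤ t) : ‖exp ((-(t : ℂ)) • F)‖ ≤ Real.exp (-(r * t)) :=
    norm_exp_neg_smul_le_of_accretive hF ht
  exact ⟨isUnit_of_norm_exp_neg_smul_le hr hdecay, integrableOn_exp_neg_smul_Ioi hr hdecay,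
    (inverse_eq_integral_exp_neg_smul hr hdecay).symm⟩
end

section
/- Let V be a finite-dimensional complex inner product space, let F be a linear operator on V, and let r > 0 be such that Re ⟪φ, F φ⟫ ≥ r ‖φ‖² for every φ ∈ V. Then for every α ∈ (0, 2π) the operator F − i·cot(α/2)·1 is invertible, and for every vector ψ ∈ V, ∫_{(0,2π)} ⟪ψ, (F − i·cot(α/2)·1)^{-1} ψ⟫ dα = 2π · ⟪ψ, (F + 1)^{-1} ψ⟫. -/
/-!
Put `u = e^{-iα}`. Then `i cot(α/2) = (u + 1)/(u - 1)`, so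
`(F - i cot(α/2))⁻¹ = (u - 1) (u (F - 1) - (F + 1))⁻¹`. The pencil `u (F - 1) - (F + 1)` is
invertible on the whole closed unit disc, since `‖(F + 1)φ‖² - ‖(F - 1)φ‖² = 4 Re⟪φ, Fφ⟫ > 0`
for `φ ≠ 0`. Hence `u ↦ (u - 1)⟪ψ, (u (F - 1) - (F + 1))⁻¹ ψ⟫` is holomorphic on the closed disc,
and by the mean value property its integral over the circle is `2π` times its value at `0`,
which is `⟪ψ, (F + 1)⁻¹ ψ⟫`.
-/

open MeasureTheory Complex Metric Set

theorem Ring.inverse_eq_smul_inverse_of_smul_eq {R A : Type*} [CommSemiring R] [Semiring A]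
    [Algebra R A] {c : R} {T P : A} (hP : IsUnit P) (h : c • T = P) :
    Ring.inverse T = c • Ring.inverse P :=
  Ring.inverse_unit
    ⟨T, c • Ring.inverse P,
      by rw [mul_smul_comm, ← smul_mul_assoc, h, Ring.mul_inverse_cancel P hP],
      by rw [smul_mul_assoc, ← mul_smul_comm, h, Ring.inverse_mul_cancel P hP]⟩

theorem ContinuousLinearMap.isUnit_of_injective {𝕜 E : Type*} [NontriviallyNormedField 𝕜]
    [CompleteSpace 𝕜] [NormedAddCommGroup E] [NormedSpace 𝕜 E] [FiniteDimensional 𝕜 E]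
    {T : E →L[𝕜] E} (hT : Function.Injective T) : IsUnit T :=
  have : CompleteSpace E := FiniteDimensional.complete 𝕜 E
  T.isUnit_iff_bijective.mpr ⟨hT, LinearMap.injective_iff_surjective.mp hT⟩

theorem Complex.exp_neg_mul_I_sub_one_mul_I_cot {x : ℂ} (hx : sin (x / 2) ≠ 0) :
    (exp (-(x * I)) - 1) * (I * cot (x / 2)) = exp (-(x * I)) + 1 := by
  have hexp : exp (-(x * I)) = exp (-(x / 2) * I) ^ 2 := by
    rw [← exp_nat_mul]; ring_nf
  rw [hexp, exp_mul_I, cos_neg, sin_neg, cot_eq_cos_div_sin]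
  field_simp
  linear_combination
    (cos (x / 2) * sin (x / 2) ^ 2 * I - 2 * cos (x / 2) ^ 2 * sin (x / 2) - sin (x / 2) ^ 3) * I_sq
      + (cos (x / 2) * I + sin (x / 2)) * cos_sq_add_sin_sq (x / 2)

section CircleMap

variable {E : Type*} [NormedAddCommGroup E] [NormedSpace ℂ E] {c : ℂ} {R : ℝ}

theorem DiffContOnCl.integral_circleMap_eq_two_pi_smul [CompleteSpace E] {f : ℂ → E}
    (hf : DiffContOnCl ℂ f (ball c |R|)) :
    ∫ θ in 0..2 * Real.pi, f (circleMap c R θ) = (2 * Real.pi) • f c := by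
  rw [← hf.circleAverage, Real.circleAverage_def, smul_inv_smul₀ Real.two_pi_pos.ne']

theorem integral_circleMap_neg (f : ℂ → E) :
    ∫ θ in 0..2 * Real.pi, f (circleMap c R (-θ)) = ∫ θ in 0..2 * Real.pi, f (circleMap c R θ) := by
  rw [intervalIntegral.integral_comp_neg (fun θ ↦ f (circleMap c R θ))]
  simpa using ((periodic_circleMap c R).comp f).intervalIntegral_add_eq (-(2 * Real.pi)) 0

end CircleMap

section Accretive

variable {V : Type*} [NormedAddCommGroup V] [InnerProductSpace ℂ V]

theorem isUnit_sub_smul_one_of_re_nonpos [FiniteDimensional ℂ V] (F : V →L[ℂ] V) {r : ℝ}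
    (hr : 0 < r) (hF : ∀ φ : V, r * ‖φ‖ ^ 2 ≤ (inner ℂ φ (F φ)).re) {z : ℂ} (hz : z.re ≤ 0) :
    IsUnit (F - z • 1) := by
  refine ContinuousLinearMap.isUnit_of_injective ((injective_iff_map_eq_zero _).mpr fun φ hφ ↦ ?_)
  have hFφ : F φ = z • φ := sub_eq_zero.mp hφ
  have hre : (inner ℂ φ (F φ)).re = z.re * ‖φ‖ ^ 2 := by
    rw [hFφ, inner_smul_right, inner_self_eq_norm_sq_to_K, ← RCLike.ofReal_pow]
    exact re_mul_ofReal z (‖φ‖ ^ 2)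
  have : ‖φ‖ ^ 2 ≤ 0 := by nlinarith [hF φ]
  simpa using this

def cayleyPencil (F : V →L[ℂ] V) (u : ℂ) : V →L[ℂ] V := u • (F - 1) - (F + 1)

theorem isUnit_cayleyPencil [FiniteDimensional ℂ V] (F : V →L[ℂ] V) {r : ℝ}
    (hr : 0 < r) (hF : ∀ φ : V, r * ‖φ‖ ^ 2 ≤ (inner ℂ φ (F φ)).re) {u : ℂ} (hu : ‖u‖ ≤ 1) :
    IsUnit (cayleyPencil F u) := by
  refine ContinuousLinearMap.isUnit_of_injective ((injective_iff_map_eq_zero _).mpr fun φ hφ ↦ ?_)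
  have hnorm : ‖φ + F φ‖ ≤ ‖φ - F φ‖ := by
    have : F φ + φ = u • (F φ - φ) := by
      rw [cayleyPencil, sub_apply, sub_eq_zero] at hφ
      simpa using hφ.symm
    rw [add_comm, this, norm_smul, norm_sub_rev]
    exact mul_le_of_le_one_left (norm_nonneg _) hu
  have hre : (inner ℂ φ (F φ)).re ≤ 0 := by
    have := re_inner_eq_norm_add_mul_self_sub_norm_sub_mul_self_div_four (𝕜 := ℂ) φ (F φ)
    simp only [RCLike.re_to_complex] at this
    rw [this]
    nlinarith [norm_nonneg (φ + F φ)]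
  have : ‖φ‖ ^ 2 ≤ 0 := by nlinarith [hF φ]
  simpa using this

theorem smul_sub_smul_one_eq_cayleyPencil (F : V →L[ℂ] V) {u w : ℂ}
    (h : (u - 1) * w = u + 1) : (u - 1) • (F - w • 1) = cayleyPencil F u := by
  rw [cayleyPencil, smul_sub, smul_smul, h]
  module

theorem differentiableOn_inner_inverse_cayleyPencil [FiniteDimensional ℂ V] (F : V →L[ℂ] V)
    {r : ℝ} (hr : 0 < r) (hF : ∀ φ : V, r * ‖φ‖ ^ 2 ≤ (inner ℂ φ (F φ)).re) (ψ : V) :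
    DifferentiableOn ℂ (fun u ↦ (u - 1) * inner ℂ ψ (Ring.inverse (cayleyPencil F u) ψ))
      (closedBall 0 1) := by
  have : CompleteSpace V := FiniteDimensional.complete ℂ V
  have hP : Differentiable ℂ (cayleyPencil F) := by unfold cayleyPencil; fun_prop
  have hinv := hP.differentiableOn.inverse fun u hu ↦
    isUnit_cayleyPencil F hr hF (mem_closedBall_zero_iff.mp hu)
  exact (differentiableOn_id.sub_const 1).mul
    (((innerSL ℂ ψ).comp (.apply ℂ V ψ)).differentiable.comp_differentiableOn hinv)

end Accretive

/-- For a strictly accretive operator `F` on a finite-dimensional complex inner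
product space, `F − i·cot(α/2)·1` is invertible for `α ∈ (0,2π)` and
`∫_{(0,2π)} ⟪ψ, (F − i·cot(α/2))⁻¹ ψ⟫ dα = 2π ⟪ψ, (F+1)⁻¹ ψ⟫`. -/
theorem stmt_9 {V : Type*} [NormedAddCommGroup V] [InnerProductSpace ℂ V]
    [FiniteDimensional ℂ V]
    (F : V →L[ℂ] V) (r : ℝ) (hr : 0 < r)
    (hF : ∀ φ : V, r * ‖φ‖ ^ 2 ≤ ((inner ℂ φ (F φ) : ℂ)).re) :
    (∀ α ∈ Set.Ioo (0 : ℝ) (2 * Real.pi),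
      IsUnit (F - (Complex.I * (Real.cot (α / 2) : ℂ)) • (1 : V →L[ℂ] V))) ∧
    ∀ ψ : V,
      (∫ α in Set.Ioo (0 : ℝ) (2 * Real.pi),
          (inner ℂ ψ ((Ring.inverse
            (F - (Complex.I * (Real.cot (α / 2) : ℂ)) • (1 : V →L[ℂ] V))) ψ) : ℂ))
        = ((2 * Real.pi : ℝ) : ℂ) * (inner ℂ ψ ((Ring.inverse (F + 1)) ψ) : ℂ) := by
  refine ⟨fun α _ ↦ isUnit_sub_smul_one_of_re_nonpos F hr hF (by simp [-ofReal_cot]), fun ψ ↦ ?_⟩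
  set G : ℂ → ℂ := fun u ↦ (u - 1) * inner ℂ ψ (Ring.inverse (cayleyPencil F u) ψ)
  have hG : ∀ {u : ℂ} {T : V →L[ℂ] V}, ‖u‖ ≤ 1 → (u - 1) • T = cayleyPencil F u →
      inner ℂ ψ (Ring.inverse T ψ) = G u := fun hu hT ↦ by
    rw [Ring.inverse_eq_smul_inverse_of_smul_eq (isUnit_cayleyPencil F hr hF hu) hT]
    exact inner_smul_right _ _ _
  have hresolvent : EqOn
      (fun α : ℝ ↦ inner ℂ ψ (Ring.inverse (F - (I * (Real.cot (α / 2) : ℂ)) • 1) ψ))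
      (fun α ↦ G (circleMap 0 1 (-α))) (Ioo 0 (2 * Real.pi)) := fun α hα ↦ by
    have hsin : sin (α / 2 : ℂ) ≠ 0 := by
      exact_mod_cast (Real.sin_pos_of_pos_of_lt_pi (by linarith [hα.1]) (by linarith [hα.2])).ne'
    refine hG (by simp) (smul_sub_smul_one_eq_cayleyPencil F ?_)
    simpa [circleMap] using exp_neg_mul_I_sub_one_mul_I_cot hsin
  have hmean : ∫ θ in 0..2 * Real.pi, G (circleMap 0 1 θ) = (2 * Real.pi) • G 0 := by
    refine DiffContOnCl.integral_circleMap_eq_two_pi_smul ?_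
    rw [abs_one]
    exact ((differentiableOn_inner_inverse_cayleyPencil F hr hF ψ).mono
      closure_ball_subset_closedBall).diffContOnCl
  rw [setIntegral_congr_fun measurableSet_Ioo hresolvent, ← integral_Ioc_eq_integral_Ioo,
    ← intervalIntegral.integral_of_le Real.two_pi_pos.le, integral_circleMap_neg, hmean,
    hG (u := 0) (by simp) (by simp [cayleyPencil, add_comm]), real_smul]
end

section
/- Let θ and θ' be independent real-valued random variables on a probability space, each taking values in [0, 2π], and suppose the law of each of them is absolutely continuous with respect to Lebesgue measure with density bounded almost everywhere by a constant M < ∞. Then for every z ∈ ℂ and every η ∈ (0,1]: ℙ( |z − e^{i(θ+θ')/2}| ≤ η ) ≤ 4π² M² η. -/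
open MeasureTheory ProbabilityTheory Real
open scoped ENNReal

/-!
Condition on `θ = x`. Two admissible angles `(x + y)/2`, `(x + y')/2` lie within `η` of the same point `z`,
so the chord between them is at most `2η`; since `|y - y'| ≤ 2π`, Jordan's inequality `|sin t| ≥ 2|t|/π`
turns this into `|y - y'| ≤ 2πη`. Hence the admissible values of `θ'` form a set of diameter, and so of
Lebesgue measure, at most `2πη`, and the density bound gives probability at most `2πMη`. Finally
`2πMη ≤ 4π²M²η` because `2πM ≥ 1`: the density of `θ'` integrates to `1` over `[0, 2π]`.
-/

lemma Complex.norm_exp_I_mul_ofReal_sub_exp_I_mul_ofReal (a b : ℝ) :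
    ‖exp (I * a) - exp (I * b)‖ = 2 * |Real.sin ((a - b) / 2)| := by
  have hfactor : exp (I * a) - exp (I * b) = exp (I * b) * (exp (I * ↑(a - b)) - 1) := by
    rw [mul_sub, mul_one, ← exp_add]
    push_cast
    ring_nf
  rw [hfactor, norm_mul, norm_exp_I_mul_ofReal, one_mul, norm_exp_I_mul_ofReal_sub_one,
    norm_mul, Real.norm_two, Real.norm_eq_abs]

lemma abs_sub_le_pi_mul_of_norm_sub_exp_le {z : ℂ} {η a b : ℝ} (hab : |a - b| ≤ π)
    (ha : ‖z - Complex.exp (Complex.I * a)‖ ≤ η) (hb : ‖z - Complex.exp (Complex.I * b)‖ ≤ η) :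
    |a - b| ≤ π * η := by
  have hchord : 2 * |Real.sin ((a - b) / 2)| ≤ 2 * η := by
    rw [← Complex.norm_exp_I_mul_ofReal_sub_exp_I_mul_ofReal]
    calc _ ≤ ‖Complex.exp (Complex.I * a) - z‖ + ‖z - Complex.exp (Complex.I * b)‖ :=
          norm_sub_le_norm_sub_add_norm_sub _ _ _
      _ ≤ 2 * η := by rw [norm_sub_rev]; linarith
  have hjordan := mul_abs_le_abs_sin (x := (a - b) / 2) (by rw [abs_div, abs_two]; linarith)
  rw [abs_div, abs_two, show 2 / π * (|a - b| / 2) = |a - b| / π by field_simp] at hjordan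
  rw [← div_le_iff₀' pi_pos]
  linarith

lemma volume_setOf_norm_sub_exp_half_add_le (z : ℂ) (η x : ℝ) :
    volume {y ∈ Set.Icc 0 (2 * π) | ‖z - Complex.exp (Complex.I * (((x + y) / 2 : ℝ) : ℂ))‖ ≤ η}
      ≤ ENNReal.ofReal (2 * π * η) := by
  refine (Real.volume_le_diam _).trans (Metric.ediam_le_of_forall_dist_le ?_)
  rintro y ⟨⟨hy0, hy2π⟩, hy⟩ y' ⟨⟨hy'0, hy'2π⟩, hy'⟩
  have hhalf : (x + y) / 2 - (x + y') / 2 = (y - y') / 2 := by ring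
  have hyy' : |y - y'| ≤ 2 * π := abs_sub_le_iff.2 ⟨by linarith, by linarith⟩
  have := abs_sub_le_pi_mul_of_norm_sub_exp_le
    (by rw [hhalf, abs_div, abs_two]; linarith) hy hy'
  rw [hhalf, abs_div, abs_two] at this
  rw [Real.dist_eq]
  linarith

lemma measure_preimage_le_of_map_eq_withDensity {Ω α : Type*} [MeasurableSpace Ω]
    [MeasurableSpace α] {P : Measure Ω} {μ : Measure α} {X : Ω → α} (hX : AEMeasurable X P)
    {g : α → ℝ≥0∞} (hmap : P.map X = μ.withDensity g) {c : ℝ≥0∞} (hgc : ∀ᵐ x ∂μ, g x ≤ c)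
    (s : Set α) : P (X ⁻¹' s) ≤ c * μ s :=
  calc P (X ⁻¹' s) ≤ P.map X s := Measure.le_map_apply hX s
    _ ≤ μ.withDensity (fun _ ↦ c) s := by rw [hmap]; exact withDensity_mono hgc s
    _ = c * μ s := by rw [withDensity_const]; rfl

lemma ProbabilityTheory.IndepFun.measure_preimage_prodMk_le {Ω α β : Type*} [MeasurableSpace Ω]
    [MeasurableSpace α] [MeasurableSpace β] {P : Measure Ω} [IsProbabilityMeasure P]
    {X : Ω → α} {Y : Ω → β} (hX : AEMeasurable X P) (hY : AEMeasurable Y P)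
    (hXY : IndepFun X Y P) {B : Set (α × β)} (hB : MeasurableSet B) {c : ℝ≥0∞}
    (hc : ∀ x, P (Y ⁻¹' {y | (x, y) ∈ B}) ≤ c) :
    P ((fun ω ↦ (X ω, Y ω)) ⁻¹' B) ≤ c := by
  have := Measure.isProbabilityMeasure_map hX
  rw [← Measure.map_apply_of_aemeasurable (hX.prodMk hY) hB,
    hXY.map_prod_eq_prod_map_map hX hY, Measure.prod_apply hB]
  refine lintegral_le_const (ae_of_all _ fun x ↦ ?_)
  rw [Measure.map_apply_of_aemeasurable hY (measurable_prodMk_left hB)]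
  exact hc x

lemma ofReal_mul_ofReal_two_pi_mul_le {M : ℝ} (hM : 1 ≤ 2 * π * M) (η : ℝ) :
    ENNReal.ofReal M * ENNReal.ofReal (2 * π * η) ≤ ENNReal.ofReal (4 * π ^ 2 * M ^ 2 * η) := by
  rcases le_or_gt η 0 with hη | hη
  · simp [ENNReal.ofReal_of_nonpos (by nlinarith [pi_pos] : 2 * π * η ≤ 0)]
  · rw [← ENNReal.ofReal_mul (by nlinarith [pi_pos])]
    have h2πMη : 0 ≤ 2 * π * M * η := by nlinarith
    exact ENNReal.ofReal_le_ofReal (by nlinarith [mul_le_mul_of_nonneg_right hM h2πMη])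

theorem stmt_12_general {Ω : Type*} [MeasurableSpace Ω] (P : Measure Ω) [IsProbabilityMeasure P]
    (θ θ' : Ω → ℝ) (hθ : Measurable θ) (hθ' : Measurable θ')
    (hindep : ProbabilityTheory.IndepFun θ θ' P)
    (hrange' : ∀ ω, θ' ω ∈ Set.Icc (0 : ℝ) (2 * Real.pi))
    (M : ℝ) (g : ℝ → ENNReal)
    (hg : Measure.map θ' P = volume.withDensity g)
    (hgM : ∀ᵐ x ∂(volume : Measure ℝ), g x ≤ ENNReal.ofReal M)
    (z : ℂ) (η : ℝ) :
    P {ω | ‖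
        (z - Complex.exp (Complex.I * (((θ ω + θ' ω) / 2 : ℝ) : ℂ)))‖ ≤ η}
      ≤ ENNReal.ofReal (4 * Real.pi ^ 2 * M ^ 2 * η) := by
  have hdensity := measure_preimage_le_of_map_eq_withDensity hθ'.aemeasurable hg hgM
  have hM : 1 ≤ 2 * π * M := by
    have := hdensity (Set.Icc 0 (2 * π))
    rw [Set.preimage_eq_univ_iff.2 fun _ ⟨ω, hω⟩ ↦ hω ▸ hrange' ω, measure_univ,
      Real.volume_Icc, sub_zero, ← ENNReal.ofReal_mul' (by positivity), ENNReal.one_le_ofReal] at this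
    linarith
  have hslice (x : ℝ) : P (θ' ⁻¹' {y | ‖z - Complex.exp (Complex.I * (((x + y) / 2 : ℝ) : ℂ))‖ ≤ η})
      ≤ ENNReal.ofReal M * ENNReal.ofReal (2 * π * η) :=
    calc _ = P (θ' ⁻¹' {y ∈ Set.Icc 0 (2 * π) |
          ‖z - Complex.exp (Complex.I * (((x + y) / 2 : ℝ) : ℂ))‖ ≤ η}) := by
          congr 1
          ext ω
          exact (and_iff_right (hrange' ω)).symm
      _ ≤ _ := (hdensity _).trans (by gcongr; exact volume_setOf_norm_sub_exp_half_add_le z η x)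
  calc _ ≤ ENNReal.ofReal M * ENNReal.ofReal (2 * π * η) :=
        hindep.measure_preimage_prodMk_le hθ.aemeasurable hθ'.aemeasurable
          (B := {p | ‖z - Complex.exp (Complex.I * (((p.1 + p.2) / 2 : ℝ) : ℂ))‖ ≤ η})
          (measurableSet_le (by fun_prop) measurable_const) hslice
    _ ≤ _ := ofReal_mul_ofReal_two_pi_mul_le hM η

/-- If `θ, θ'` are independent random variables with values in `[0,2π]` whose laws
have Lebesgue densities bounded by `M`, then for every `z ∈ ℂ` and `η ∈ (0,1]`,
`ℙ(|z − e^{i(θ+θ')/2}| ≤ η) ≤ 4π² M² η`. -/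
theorem stmt_12 {Ω : Type*} [MeasurableSpace Ω] (P : Measure Ω) [IsProbabilityMeasure P]
    (θ θ' : Ω → ℝ) (hθ : Measurable θ) (hθ' : Measurable θ')
    (hindep : ProbabilityTheory.IndepFun θ θ' P)
    (hrange : ∀ ω, θ ω ∈ Set.Icc (0 : ℝ) (2 * Real.pi))
    (hrange' : ∀ ω, θ' ω ∈ Set.Icc (0 : ℝ) (2 * Real.pi))
    (M : ℝ) (f g : ℝ → ENNReal)
    (hf : Measure.map θ P = volume.withDensity f)
    (hg : Measure.map θ' P = volume.withDensity g)
    (hfM : ∀ᵐ x ∂(volume : Measure ℝ), f x ≤ ENNReal.ofReal M)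
    (hgM : ∀ᵐ x ∂(volume : Measure ℝ), g x ≤ ENNReal.ofReal M)
    (z : ℂ) (η : ℝ) (hη : η ∈ Set.Ioc (0 : ℝ) 1) :
    P {ω | ‖
        (z - Complex.exp (Complex.I * (((θ ω + θ' ω) / 2 : ℝ) : ℂ)))‖ ≤ η}
      ≤ ENNReal.ofReal (4 * Real.pi ^ 2 * M ^ 2 * η) :=
  stmt_12_general P θ θ' hθ hθ' hindep hrange' M g hg hgM z η
end

section
/- Let H be a complex Hilbert space, A a finite index set, and (P_α)_{α∈A} a family of orthogonal projections on H that are pairwise orthogonal (P_α P_{α'} = 0 for α ≠ α'). Let ψ, φ ∈ H with ‖ψ‖ = ‖φ‖ = 1, and for β ∈ [0,1] define Q(β) = Σ_{α∈A} ‖P_α ψ‖^{2(1−β)} · |⟪ψ, P_α φ⟫|^β. Then for all 0 ≤ a ≤ b ≤ 1 with a < 1 one has Q(b) ≤ Q(a)^{(1−b)/(1−a)}. -/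
/-!
Writing `θ = (1 - b) / (1 - a)`, the point `b = θ a + (1 - θ) · 1` interpolates between `a` and `1`,
and termwise `‖P ψ‖ ^ (2 (1 - b)) y ^ b = (‖P ψ‖ ^ (2 (1 - a)) y ^ a) ^ θ · y ^ (1 - θ)`
with `y = |⟪ψ, P φ⟫|`. Hölder's inequality with exponents `1 / θ`, `1 / (1 - θ)` gives
`Q b ≤ Q a ^ θ · Q 1 ^ (1 - θ)`, and `Q 1 ≤ 1`: since `⟪ψ, P φ⟫ = ⟪P ψ, P φ⟫`,
Cauchy–Schwarz bounds `Q 1` by `(∑ ‖P ψ‖²)^½ (∑ ‖P φ‖²)^½`, and both factors are at most `1`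
by Bessel's inequality for the mutually orthogonal ranges of the `P α`.
-/

open Finset RCLike

section Projections

variable {𝕜 E : Type*} [RCLike 𝕜] [NormedAddCommGroup E] [InnerProductSpace 𝕜 E]

local notation "⟪" x ", " y "⟫" => inner 𝕜 x y

theorem norm_sum_sq_of_pairwise_inner_eq_zero {ι : Type*} (s : Finset ι) (v : ι → E)
    (hv : Pairwise fun i j => ⟪v i, v j⟫ = 0) :
    ‖∑ i ∈ s, v i‖ ^ 2 = ∑ i ∈ s, ‖v i‖ ^ 2 := by
  classical
  rw [@norm_sq_eq_re_inner 𝕜, sum_inner, map_sum]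
  refine sum_congr rfl fun i hi => ?_
  rw [inner_sum, sum_eq_single_of_mem i hi fun j _ hji => hv hji.symm, ← norm_sq_eq_re_inner]

variable [CompleteSpace E]

theorem IsStarProjection.inner_apply_right {T : E →L[𝕜] E} (hT : IsStarProjection T) (x y : E) :
    ⟪x, T y⟫ = ⟪T x, T y⟫ := by
  calc ⟪x, T y⟫ = ⟪x, (T * T) y⟫ := by rw [hT.isIdempotentElem.eq]
    _ = ⟪T x, T y⟫ := (hT.isSelfAdjoint.isSymmetric x (T y)).symm

theorem IsStarProjection.norm_apply_sq {T : E →L[𝕜] E} (hT : IsStarProjection T) (x : E) :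
    ‖T x‖ ^ 2 = re ⟪x, T x⟫ := by
  rw [hT.inner_apply_right, ← norm_sq_eq_re_inner]

variable {ι : Type*} [Fintype ι] {P : ι → E →L[𝕜] E}

theorem sum_norm_apply_sq_le_norm_sq (hP : ∀ i, IsStarProjection (P i))
    (horth : Pairwise fun i j => P i * P j = 0) (x : E) :
    ∑ i, ‖P i x‖ ^ 2 ≤ ‖x‖ ^ 2 := by
  set S := ∑ i, P i x
  have hpyth : ‖S‖ ^ 2 = ∑ i, ‖P i x‖ ^ 2 := by
    refine norm_sum_sq_of_pairwise_inner_eq_zero (𝕜 := 𝕜) _ _ fun i j hij => ?_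
    calc ⟪P i x, P j x⟫ = ⟪x, (P i * P j) x⟫ := (hP i).isSelfAdjoint.isSymmetric x (P j x)
      _ = 0 := by rw [horth hij, zero_apply, inner_zero_right]
  have hre : ∑ i, ‖P i x‖ ^ 2 = re ⟪x, S⟫ := by
    simp only [S, inner_sum, map_sum, (hP _).norm_apply_sq]
  have hS : ‖S‖ ≤ ‖x‖ := by
    have : ‖S‖ ^ 2 ≤ ‖x‖ * ‖S‖ :=
      hpyth ▸ hre ▸ (re_le_norm _).trans (norm_inner_le_norm x S)
    nlinarith [norm_nonneg S, norm_nonneg x]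
  rw [← hpyth]
  gcongr

theorem sum_norm_inner_apply_le_norm_mul_norm (hP : ∀ i, IsStarProjection (P i))
    (horth : Pairwise fun i j => P i * P j = 0) (x y : E) :
    ∑ i, ‖⟪x, P i y⟫‖ ≤ ‖x‖ * ‖y‖ := by
  calc ∑ i, ‖⟪x, P i y⟫‖ ≤ ∑ i, ‖P i x‖ * ‖P i y‖ := by
        gcongr with i
        rw [(hP i).inner_apply_right]
        exact norm_inner_le_norm _ _
    _ ≤ √(∑ i, ‖P i x‖ ^ 2) * √(∑ i, ‖P i y‖ ^ 2) := Real.sum_mul_le_sqrt_mul_sqrt _ _ _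
    _ ≤ √(‖x‖ ^ 2) * √(‖y‖ ^ 2) := by
        gcongr <;> exact sum_norm_apply_sq_le_norm_sq hP horth _
    _ = ‖x‖ * ‖y‖ := by rw [Real.sqrt_sq (norm_nonneg x), Real.sqrt_sq (norm_nonneg y)]

end Projections

namespace Real

variable {ι : Type*} (s : Finset ι) {u v : ι → ℝ}

theorem sum_rpow_mul_rpow_one_sub_le (hu : ∀ i ∈ s, 0 ≤ u i) (hv : ∀ i ∈ s, 0 ≤ v i) {θ : ℝ}
    (hθ₀ : 0 ≤ θ) (hθ₁ : θ ≤ 1) :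
    ∑ i ∈ s, u i ^ θ * v i ^ (1 - θ) ≤ (∑ i ∈ s, u i) ^ θ * (∑ i ∈ s, v i) ^ (1 - θ) := by
  rcases hθ₀.eq_or_lt with rfl | hθ₀
  · simp
  rcases hθ₁.eq_or_lt with rfl | hθ₁
  · simp
  convert inner_le_Lp_mul_Lq_of_nonneg s (HolderConjugate.inv_one_sub_inv hθ₀ hθ₁)
    (fun i hi => rpow_nonneg (hu i hi) θ) (fun i hi => rpow_nonneg (hv i hi) (1 - θ)) using 3
  · exact sum_congr rfl fun i hi => (rpow_rpow_inv (hu i hi) hθ₀.ne').symm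
  · rw [one_div, inv_inv]
  · exact sum_congr rfl fun i hi => (rpow_rpow_inv (hv i hi) (sub_pos.2 hθ₁).ne').symm
  · rw [one_div, inv_inv]

theorem sum_rpow_one_sub_mul_rpow_le (hu : ∀ i ∈ s, 0 ≤ u i) (hv : ∀ i ∈ s, 0 ≤ v i) {a b : ℝ}
    (ha : 0 ≤ a) (hab : a ≤ b) (hb : b ≤ 1) (ha₁ : a < 1) :
    ∑ i ∈ s, u i ^ (1 - b) * v i ^ b ≤
      (∑ i ∈ s, u i ^ (1 - a) * v i ^ a) ^ ((1 - b) / (1 - a)) *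
        (∑ i ∈ s, v i) ^ ((b - a) / (1 - a)) := by
  set θ := (1 - b) / (1 - a)
  have hθ₀ : 0 ≤ θ := div_nonneg (by linarith) (by linarith)
  have hθ₁ : θ ≤ 1 := (div_le_one (by linarith)).2 (by linarith)
  have ha₁' : 1 - a ≠ 0 := by linarith
  have hθ : (b - a) / (1 - a) = 1 - θ := by simp only [θ]; field_simp; ring
  have hpoint : ∀ i ∈ s,
      u i ^ (1 - b) * v i ^ b = (u i ^ (1 - a) * v i ^ a) ^ θ * v i ^ (1 - θ) := by
    intro i hi
    have hexp : (1 - a) * θ = 1 - b := mul_div_cancel₀ _ ha₁'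
    rw [mul_rpow (rpow_nonneg (hu i hi) _) (rpow_nonneg (hv i hi) _), ← rpow_mul (hu i hi),
      ← rpow_mul (hv i hi), mul_assoc, ← rpow_add_of_nonneg (hv i hi) (mul_nonneg ha hθ₀)
      (by linarith), hexp]
    congr 2
    simp only [θ]
    field_simp
    ring
  rw [hθ, sum_congr rfl hpoint]
  exact sum_rpow_mul_rpow_one_sub_le s
    (fun i hi => mul_nonneg (rpow_nonneg (hu i hi) _) (rpow_nonneg (hv i hi) _)) hv hθ₀ hθ₁

end Real

/-- Monotonicity estimate `Q(b) ≤ Q(a)^{(1−b)/(1−a)}` for the interpolated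
eigenfunction correlator of pairwise orthogonal projections and normalized vectors. -/
theorem stmt_15 {H : Type*} [NormedAddCommGroup H] [InnerProductSpace ℂ H] [CompleteSpace H]
    {ι : Type*} [Fintype ι] (P : ι → H →L[ℂ] H)
    (hP : ∀ α, IsIdempotentElem (P α) ∧ IsSelfAdjoint (P α))
    (horth : ∀ α α', α ≠ α' → P α * P α' = 0)
    (ψ φ : H) (hψ : ‖ψ‖ = 1) (hφ : ‖φ‖ = 1) (Q : ℝ → ℝ)
    (hQ : ∀ β : ℝ, Q β = ∑ α, ‖(P α) ψ‖ ^ (2 * (1 - β))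
        * ‖inner ℂ ψ ((P α) φ)‖ ^ β)
    (a b : ℝ) (ha : 0 ≤ a) (hab : a ≤ b) (hb : b ≤ 1) (ha1 : a < 1) :
    Q b ≤ Q a ^ ((1 - b) / (1 - a)) := by
  have hproj : ∀ α, IsStarProjection (P α) := fun α => (isStarProjection_iff _).2 (hP α)
  have hQ' : ∀ β, Q β = ∑ α, (‖P α ψ‖ ^ (2 : ℝ)) ^ (1 - β) * ‖inner ℂ ψ (P α φ)‖ ^ β := by
    simp only [hQ, ← Real.rpow_mul (norm_nonneg _), implies_true]
  have hQ₁ : ∑ α, ‖inner ℂ ψ (P α φ)‖ ≤ 1 := by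
    simpa [hψ, hφ] using
      sum_norm_inner_apply_le_norm_mul_norm hproj (fun α α' h => horth α α' h) ψ φ
  calc Q b ≤ Q a ^ ((1 - b) / (1 - a)) * (∑ α, ‖inner ℂ ψ (P α φ)‖) ^ ((b - a) / (1 - a)) := by
        rw [hQ', hQ']
        exact Real.sum_rpow_one_sub_mul_rpow_le _ (fun _ _ => by positivity)
          (fun _ _ => norm_nonneg _) ha hab hb ha1
    _ ≤ Q a ^ ((1 - b) / (1 - a)) :=
        mul_le_of_le_one_right (Real.rpow_nonneg (by rw [hQ']; positivity) _)
          (Real.rpow_le_one (by positivity) hQ₁ (div_nonneg (by linarith) (by linarith)))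
end

section
/- Let H be a complex Hilbert space, A a finite index set, (P_α)_{α∈A} a family of orthogonal projections on H, ψ, φ ∈ H, and β ∈ [0,1]. Then Σ_{α∈A} |⟪ψ, P_α φ⟫| ≤ sqrt( (Σ_{α∈A} ‖P_α ψ‖^{2(1−β)} |⟪ψ, P_α φ⟫|^β) · (Σ_{α∈A} ‖P_α φ‖^{2(1−β)} |⟪φ, P_α ψ⟫|^β) ). -/
/-!
For an orthogonal projection `P`, `⟪ψ, P φ⟫ = ⟪P ψ, P φ⟫`, so `c := |⟪ψ, P φ⟫|` is at most
`‖P ψ‖ ‖P φ‖` and is symmetric in `ψ, φ`. Splitting `c = c ^ (1 - β) c ^ β ≤ (‖P ψ‖ ‖P φ‖) ^ (1 - β) c ^ β`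
writes each term as a product of the square roots of the two interpolated terms, and the
Cauchy–Schwarz inequality for finite sums finishes the proof.
-/

open scoped InnerProductSpace

namespace IsStarProjection

open ContinuousLinearMap

variable {𝕜 E : Type*} [RCLike 𝕜] [NormedAddCommGroup E] [InnerProductSpace 𝕜 E]
  [CompleteSpace E] {P : E →L[𝕜] E}

theorem inner_apply_right_eq (hP : IsStarProjection P) (x y : E) :
    ⟪x, P y⟫_𝕜 = ⟪P x, P y⟫_𝕜 := by
  conv_lhs => rw [← hP.isIdempotentElem.eq]
  rw [mul_apply_eq_comp, ← adjoint_inner_left, hP.isSelfAdjoint.adjoint_eq]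

theorem norm_inner_apply_le (hP : IsStarProjection P) (x y : E) :
    ‖⟪x, P y⟫_𝕜‖ ≤ ‖P x‖ * ‖P y‖ :=
  hP.inner_apply_right_eq x y ▸ norm_inner_le_norm _ _

theorem norm_inner_apply_comm (hP : IsStarProjection P) (x y : E) :
    ‖⟪y, P x⟫_𝕜‖ = ‖⟪x, P y⟫_𝕜‖ := by
  rw [← adjoint_inner_left, hP.isSelfAdjoint.adjoint_eq, ← inner_conj_symm, RCLike.norm_conj]

end IsStarProjection

namespace Real

theorem sqrt_rpow_mul_rpow_half {z c β : ℝ} (hz : 0 ≤ z) (hc : 0 ≤ c) :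
    √(z ^ (2 * (1 - β)) * c ^ β) = z ^ (1 - β) * c ^ (β / 2) := by
  rw [sqrt_eq_rpow, mul_rpow (by positivity) (by positivity), ← rpow_mul hz, ← rpow_mul hc]
  ring_nf

theorem le_sqrt_interpolate_mul_sqrt_interpolate {c x y β : ℝ} (hc : 0 ≤ c) (hx : 0 ≤ x)
    (hy : 0 ≤ y) (hβ : β ≤ 1) (h : c ≤ x * y) :
    c ≤ √(x ^ (2 * (1 - β)) * c ^ β) * √(y ^ (2 * (1 - β)) * c ^ β) := by
  have hc_split : c ^ (β / 2) * c ^ (β / 2) = c ^ β := by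
    rw [← sq, ← rpow_mul_natCast hc]
    ring_nf
  calc c = c ^ (1 - β) * c ^ β := by
        rw [← rpow_add' hc (by norm_num), sub_add_cancel, rpow_one]
    _ ≤ (x * y) ^ (1 - β) * c ^ β := by gcongr
    _ = _ := by
        rw [sqrt_rpow_mul_rpow_half hx hc, sqrt_rpow_mul_rpow_half hy hc, mul_rpow hx hy,
          ← hc_split]
        ring

theorem sum_le_sqrt_mul_sum_interpolate {ι : Type*} (s : Finset ι) {c x y : ι → ℝ} {β : ℝ}
    (hc : ∀ i, 0 ≤ c i) (hx : ∀ i, 0 ≤ x i) (hy : ∀ i, 0 ≤ y i) (hβ : β ≤ 1)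
    (h : ∀ i, c i ≤ x i * y i) :
    ∑ i ∈ s, c i ≤ √((∑ i ∈ s, x i ^ (2 * (1 - β)) * c i ^ β) *
      ∑ i ∈ s, y i ^ (2 * (1 - β)) * c i ^ β) := by
  have hx' : ∀ i, 0 ≤ x i ^ (2 * (1 - β)) * c i ^ β := fun i =>
    mul_nonneg (rpow_nonneg (hx i) _) (rpow_nonneg (hc i) _)
  have hy' : ∀ i, 0 ≤ y i ^ (2 * (1 - β)) * c i ^ β := fun i =>
    mul_nonneg (rpow_nonneg (hy i) _) (rpow_nonneg (hc i) _)
  calc ∑ i ∈ s, c i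
      ≤ ∑ i ∈ s, √(x i ^ (2 * (1 - β)) * c i ^ β) * √(y i ^ (2 * (1 - β)) * c i ^ β) :=
        Finset.sum_le_sum fun i _ =>
          le_sqrt_interpolate_mul_sqrt_interpolate (hc i) (hx i) (hy i) hβ (h i)
    _ ≤ √(∑ i ∈ s, x i ^ (2 * (1 - β)) * c i ^ β) * √(∑ i ∈ s, y i ^ (2 * (1 - β)) * c i ^ β) :=
        sum_sqrt_mul_sqrt_le s hx' hy'
    _ = _ := (sqrt_mul (Finset.sum_nonneg fun i _ => hx' i) _).symm

end Real

/-- The eigenfunction correlator is bounded by the geometric mean of the two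
interpolated eigenfunction correlators:
`Σ_α |⟪ψ, P_α φ⟫| ≤ sqrt(Q(ψ,φ;β) · Q(φ,ψ;β))`. -/
theorem stmt_16 {H : Type*} [NormedAddCommGroup H] [InnerProductSpace ℂ H] [CompleteSpace H]
    {ι : Type*} [Fintype ι] (P : ι → H →L[ℂ] H)
    (hP : ∀ α, IsIdempotentElem (P α) ∧ IsSelfAdjoint (P α))
    (ψ φ : H) (β : ℝ) (hβ : β ∈ Set.Icc (0 : ℝ) 1) :
    ∑ α, ‖(inner ℂ ψ ((P α) φ))‖ ≤
      Real.sqrt ((∑ α, ‖(P α) ψ‖ ^ (2 * (1 - β))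
            * ‖(inner ℂ ψ ((P α) φ))‖ ^ β)
        * (∑ α, ‖(P α) φ‖ ^ (2 * (1 - β))
            * ‖(inner ℂ φ ((P α) ψ))‖ ^ β)) := by
  have hPα : ∀ α, IsStarProjection (P α) := fun α => ⟨(hP α).1, (hP α).2⟩
  simp_rw [(hPα _).norm_inner_apply_comm ψ φ]
  exact Real.sum_le_sqrt_mul_sum_interpolate _ (fun _ => norm_nonneg _) (fun _ => norm_nonneg _)
    (fun _ => norm_nonneg _) hβ.2 fun α => (hPα α).norm_inner_apply_le ψ φ
end

section
/- Let H be a complex Hilbert space, let U and W be unitary operators on H, let Q be an orthogonal projection on H that commutes with W, set T = U − W, let λ ∈ ℂ with |λ| = 1, let δ ∈ (0,1), and let P be an orthogonal projection on H satisfying U P = λ P. Then W − δλ·1 is boundedly invertible and Q P = −(W − δλ·1)^{-1} · Q · (T − (1−δ)λ·1) · P. -/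
/-- The basic geometric resolvent identity for eigenprojections:
if `UP = λP`, `Q` commutes with `W`, `T = U − W`, `|λ| = 1` and `δ ∈ (0,1)`, then
`W − δλ` is invertible and `QP = −(W − δλ)⁻¹ Q (T − (1−δ)λ) P`. -/
theorem stmt_17 {H : Type*} [NormedAddCommGroup H] [InnerProductSpace ℂ H] [CompleteSpace H]
    (U W : H →L[ℂ] H) (hU : U ∈ unitary (H →L[ℂ] H)) (hW : W ∈ unitary (H →L[ℂ] H))
    (Q : H →L[ℂ] H) (hQ : IsIdempotentElem Q ∧ IsSelfAdjoint Q)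
    (hQW : Commute Q W)
    (T : H →L[ℂ] H) (hT : T = U - W)
    (l : ℂ) (hl : ‖l‖ = 1) (δ : ℝ) (hδ : δ ∈ Set.Ioo (0 : ℝ) 1)
    (P : H →L[ℂ] H) (hP : IsIdempotentElem P ∧ IsSelfAdjoint P)
    (hUP : U * P = l • P) :
    IsUnit (W - ((δ : ℂ) * l) • (1 : H →L[ℂ] H)) ∧
    Q * P = -(Ring.inverse (W - ((δ : ℂ) * l) • (1 : H →L[ℂ] H)) * Q
        * (T - (((1 : ℂ) - (δ : ℂ)) * l) • (1 : H →L[ℂ] H)) * P) := by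
  obtain ⟨hδ0, hδ1⟩ := hδ
  set A : H →L[ℂ] H := W - ((δ : ℂ) * l) • (1 : H →L[ℂ] H) with hA
  have hnorm : ‖(δ : ℂ) * l‖ = δ := by
    rw [norm_mul, hl, mul_one, Complex.norm_real, Real.norm_eq_abs, abs_of_pos hδ0]
  have hnotmem : (δ : ℂ) * l ∉ spectrum ℂ W := by
    intro hmem
    have := spectrum.subset_circle_of_unitary hW hmem
    rw [mem_sphere_zero_iff_norm, hnorm] at this
    exact hδ1.ne this
  have hunit : IsUnit A := by
    rw [spectrum.notMem_iff] at hnotmem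
    have : A = -(algebraMap ℂ (H →L[ℂ] H) ((δ : ℂ) * l) - W) := by
      simp [hA, Algebra.algebraMap_eq_smul_one]
    rw [this]
    exact hnotmem.neg
  refine ⟨hunit, ?_⟩
  have key : (T - (((1 : ℂ) - (δ : ℂ)) * l) • (1 : H →L[ℂ] H)) * P = -(A * P) := by
    rw [hT, hA]
    simp only [sub_mul, smul_mul_assoc, one_mul, hUP]
    module
  have hcommA : Q * A = A * Q := by
    rw [hA]
    simp only [mul_sub, sub_mul, hQW.eq, mul_smul_comm, smul_mul_assoc, mul_one, one_mul]
  calc Q * P = Ring.inverse A * A * (Q * P) := by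
        rw [Ring.inverse_mul_cancel _ hunit, one_mul]
    _ = Ring.inverse A * (Q * A * P) := by rw [hcommA]; noncomm_ring
    _ = -(Ring.inverse A * Q * (T - (((1 : ℂ) - (δ : ℂ)) * l) • (1 : H →L[ℂ] H)) * P) := by
        rw [mul_assoc (Ring.inverse A * Q), key]
        noncomm_ring
end

section
/- Let R be a unital associative algebra over ℂ, let u ∈ ℂ with |u| = 1 and u ≠ 1 and u ≠ −1, and set m = i(1+u)/(1−u) (a nonzero real number, equal to −cot(α/2) when u = e^{iα}). Let A, B ∈ R with B invertible, and suppose A − B = (1/2)(u − 1)(1 + B)(1 − A). If −iB + m·1 and −iB^{-1} − m^{-1}·1 are both invertible in R, then A = −i(−iB + m·1)^{-1} − i(−iB^{-1} − m^{-1}·1)^{-1}. -/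
/-!
Write `X = -iB + m` and `Y = -iB⁻¹ - m⁻¹`. With `c = (u - 1)/2`, the hypothesis says
`(1 + c(1 + B)) A = B + c(1 + B)`, and the choice of `m` makes `1 + c(1 + B) = ic X`, so that
`X A = -i + mB`. On the other side `X = im B Y`, hence `X Y⁻¹ = im B` and
`X (-iX⁻¹ - iY⁻¹) = -i + mB` as well. Cancelling the unit `X` gives the identity.
-/

open Complex

theorem smul_add_smul_one_mul_eq_of_sub_eq {𝕜 R : Type*} [Field 𝕜] [Ring R] [Algebra 𝕜 R]
    {a c m : 𝕜} (ha : a ≠ 0) (hc : c ≠ 0) (hacm : a * (1 + c) = c * m) {A B : R}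
    (hAB : A - B = c • ((1 + B) * (1 - A))) :
    (a • B + m • (1 : R)) * A = a • (1 : R) + m • B := by
  have hresolvent : (1 + c • (1 + B)) * A = B + c • (1 + B) := by
    rw [mul_sub, mul_one, smul_sub, sub_eq_sub_iff_add_eq_add] at hAB
    rw [add_mul, one_mul, smul_mul_assoc, hAB, add_comm]
  have hm : m = a * (1 + c) / c := by field_simp; linear_combination -hacm
  have hX : (c / a) • (a • B + m • (1 : R)) = 1 + c • (1 + B) := by
    rw [hm]; match_scalars <;> field_simp
  have hrhs : (c / a) • (a • (1 : R) + m • B) = B + c • (1 + B) := by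
    rw [hm]; match_scalars <;> field_simp
  refine smul_right_injective R (div_ne_zero hc ha) ?_
  show (c / a) • _ = (c / a) • _
  rw [← smul_mul_assoc, hX, hrhs, hresolvent]

theorem neg_I_smul_add_smul_one_eq_smul_mul {R : Type*} [Ring R] [Algebra ℂ R]
    {m : ℂ} (hm : m ≠ 0) {B : R} (hB : IsUnit B) :
    (-I) • B + m • (1 : R) = (I * m) • (B * ((-I) • Ring.inverse B - m⁻¹ • (1 : R))) := by
  rw [mul_sub, mul_smul_comm, mul_smul_comm, Ring.mul_inverse_cancel B hB, mul_one]
  match_scalars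
  · field_simp
  · field_simp; linear_combination I_sq

theorem neg_I_smul_add_smul_one_mul_inverse_add_inverse {R : Type*} [Ring R] [Algebra ℂ R]
    {m : ℂ} (hm : m ≠ 0) {B : R} (hB : IsUnit B)
    (hX : IsUnit ((-I) • B + m • (1 : R)))
    (hY : IsUnit ((-I) • Ring.inverse B - m⁻¹ • (1 : R))) :
    ((-I) • B + m • (1 : R)) * ((-I) • Ring.inverse ((-I) • B + m • (1 : R))
      + (-I) • Ring.inverse ((-I) • Ring.inverse B - m⁻¹ • (1 : R))) = (-I) • (1 : R) + m • B := by
  have hXY : ((-I) • B + m • (1 : R)) * Ring.inverse ((-I) • Ring.inverse B - m⁻¹ • (1 : R))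
      = (I * m) • B := by
    conv_lhs => rw [neg_I_smul_add_smul_one_eq_smul_mul hm hB]
    rw [smul_mul_assoc, mul_assoc, Ring.mul_inverse_cancel _ hY, mul_one]
  rw [mul_add, mul_smul_comm, mul_smul_comm, Ring.mul_inverse_cancel _ hX, hXY, smul_smul]
  match_scalars <;> ring_nf; simp

theorem neg_I_mul_one_add_half_sub_one {u m : ℂ} (hu1 : u ≠ 1)
    (hm : m = I * (1 + u) / (1 - u)) :
    -I * (1 + (u - 1) / 2) = (u - 1) / 2 * m := by
  have : (1 : ℂ) - u ≠ 0 := sub_ne_zero.mpr hu1.symm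
  rw [hm]
  field_simp
  ring

theorem stmt_19_general {R : Type*} [Ring R] [Algebra ℂ R]
    (u : ℂ) (hu1 : u ≠ 1) (hu2 : u ≠ -1)
    (m : ℂ) (hm : m = Complex.I * (1 + u) / (1 - u))
    (A B : R) (hB : IsUnit B)
    (hAB : A - B = ((u - 1) / 2) • ((1 + B) * (1 - A)))
    (h1 : IsUnit ((-Complex.I) • B + m • (1 : R)))
    (h2 : IsUnit ((-Complex.I) • Ring.inverse B - m⁻¹ • (1 : R))) :
    A = (-Complex.I) • Ring.inverse ((-Complex.I) • B + m • (1 : R))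
      + (-Complex.I) • Ring.inverse ((-Complex.I) • Ring.inverse B - m⁻¹ • (1 : R)) := by
  have hc : (u - 1) / 2 ≠ 0 := div_ne_zero (sub_ne_zero.mpr hu1) two_ne_zero
  have hm0 : m ≠ 0 := by
    rw [hm]
    exact div_ne_zero (mul_ne_zero I_ne_zero fun h => hu2 (by linear_combination h))
      (sub_ne_zero.mpr hu1.symm)
  refine h1.mul_left_cancel ?_
  rw [smul_add_smul_one_mul_eq_of_sub_eq (neg_ne_zero.mpr I_ne_zero) hc
      (neg_I_mul_one_add_half_sub_one hu1 hm) hAB,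
    neg_I_smul_add_smul_one_mul_inverse_add_inverse hm0 hB h1 h2]

/-- The algebraic identity (fmb estimate 2): with `m = i(1+u)/(1−u)` and
`A − B = ½(u−1)(1+B)(1−A)`, one has
`A = −i(−iB + m)⁻¹ − i(−iB⁻¹ − m⁻¹)⁻¹`. -/
theorem stmt_19 {R : Type*} [Ring R] [Algebra ℂ R]
    (u : ℂ) (hu : ‖u‖ = 1) (hu1 : u ≠ 1) (hu2 : u ≠ -1)
    (m : ℂ) (hm : m = Complex.I * (1 + u) / (1 - u))
    (A B : R) (hB : IsUnit B)
    (hAB : A - B = ((u - 1) / 2) • ((1 + B) * (1 - A)))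
    (h1 : IsUnit ((-Complex.I) • B + m • (1 : R)))
    (h2 : IsUnit ((-Complex.I) • Ring.inverse B - m⁻¹ • (1 : R))) :
    A = (-Complex.I) • Ring.inverse ((-Complex.I) • B + m • (1 : R))
      + (-Complex.I) • Ring.inverse ((-Complex.I) • Ring.inverse B - m⁻¹ • (1 : R)) :=
  stmt_19_general u hu1 hu2 m hm A B hB hAB h1 h2
end
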